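/- arXiv:math-ph/0201016 — 3 statements merged into one kernel-verified Lean document; each statement's English description precedes it below -/
import Mathlib

section
/- Let A be a von Neumann algebra on a Hilbert space H and let U₁, U₂ : G → U(A) be two homomorphisms from a perfect group G into the unitary group of A such that for every g ∈ G and every a ∈ A, U₁(g) a U₁(g)* = U₂(g) a U₂(g)*. Then U₁ = U₂. -/
/-- Two homomorphisms from a perfect group into the unitary group of a von Neumann
algebra `A` which implement the same automorphisms of `A` coincide. -/
theorem stmt_1 {H : Type*} [NormedAddCommGroup H] [InnerProductSpace ℂ H]
    [CompleteSpace H] (A : VonNeumannAlgebra H) {G : Type*} [Group G]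
    (hG : commutator G = ⊤)
    (U₁ U₂ : G →* unitary (H →L[ℂ] H))
    (hU₁ : ∀ g, (U₁ g : H →L[ℂ] H) ∈ A) (hU₂ : ∀ g, (U₂ g : H →L[ℂ] H) ∈ A)
    (hAd : ∀ g, ∀ a ∈ A,
      (U₁ g : H →L[ℂ] H) * a * star (U₁ g : H →L[ℂ] H) =
      (U₂ g : H →L[ℂ] H) * a * star (U₂ g : H →L[ℂ] H)) :
    U₁ = U₂ := by
  -- the "discrepancy" map
  set w : G → unitary (H →L[ℂ] H) := fun g => (U₂ g)⁻¹ * U₁ g with hw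
  have hcoe : ∀ g, (w g : H →L[ℂ] H) = star (U₂ g : H →L[ℂ] H) * U₁ g := fun g => rfl
  -- w g commutes with every element of A
  have hcomm : ∀ g, ∀ a ∈ A, (w g : H →L[ℂ] H) * a = a * w g := by
    intro g a ha
    have h := hAd g a ha
    have h1 : star (U₂ g : H →L[ℂ] H) * ((U₁ g : H →L[ℂ] H) * a * star (U₁ g : H →L[ℂ] H)) * (U₁ g : H →L[ℂ] H)
        = star (U₂ g : H →L[ℂ] H) * ((U₂ g : H →L[ℂ] H) * a * star (U₂ g : H →L[ℂ] H)) * (U₁ g : H →L[ℂ] H) := by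
      rw [h]
    have e1 : star (U₁ g : H →L[ℂ] H) * (U₁ g : H →L[ℂ] H) = 1 := Unitary.coe_star_mul_self (U₁ g)
    have e2 : star (U₂ g : H →L[ℂ] H) * (U₂ g : H →L[ℂ] H) = 1 := Unitary.coe_star_mul_self (U₂ g)
    calc (w g : H →L[ℂ] H) * a
        = star (U₂ g : H →L[ℂ] H) * (U₁ g : H →L[ℂ] H) * a * (star (U₁ g : H →L[ℂ] H) * (U₁ g : H →L[ℂ] H)) := by
          rw [e1, mul_one, hcoe]
      _ = star (U₂ g : H →L[ℂ] H) * ((U₁ g : H →L[ℂ] H) * a * star (U₁ g : H →L[ℂ] H)) * (U₁ g : H →L[ℂ] H) := by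
          simp only [mul_assoc]
      _ = star (U₂ g : H →L[ℂ] H) * ((U₂ g : H →L[ℂ] H) * a * star (U₂ g : H →L[ℂ] H)) * (U₁ g : H →L[ℂ] H) := h1
      _ = (star (U₂ g : H →L[ℂ] H) * (U₂ g : H →L[ℂ] H)) * (a * (star (U₂ g : H →L[ℂ] H) * (U₁ g : H →L[ℂ] H))) := by
          simp only [mul_assoc]
      _ = a * w g := by rw [e2, one_mul, hcoe]
  -- w g belongs to A
  have hmem : ∀ g, (w g : H →L[ℂ] H) ∈ A := by
    intro g
    rw [hcoe]
    exact mul_mem (star_mem (hU₂ g)) (hU₁ g)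
  -- the w g's commute with each other
  have hcc : ∀ g h, Commute (w g) (w h) :=
    fun g h => Subtype.ext (hcomm g (w h) (hmem h))
  -- triviality on commutators
  open scoped commutatorElement in
  have hker : ∀ g h : G, U₁ ⁅g, h⁆ = U₂ ⁅g, h⁆ := by
    intro g h
    have hwmul : ∀ g h : G, w (g * h) = w g * w h := by
      intro g h
      refine Subtype.ext ?_
      have hm : (star (U₂ h : H →L[ℂ] H)) ∈ A := star_mem (hU₂ h)
      calc (w (g * h) : H →L[ℂ] H)
          = star (U₂ h : H →L[ℂ] H) * ((star (U₂ g : H →L[ℂ] H) * (U₁ g : H →L[ℂ] H)) * (U₁ h : H →L[ℂ] H)) := by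
            rw [hcoe, map_mul, map_mul, Submonoid.coe_mul, Submonoid.coe_mul, star_mul]
            simp only [mul_assoc]
        _ = star (U₂ h : H →L[ℂ] H) * ((w g : H →L[ℂ] H) * (U₁ h : H →L[ℂ] H)) := by
            rw [hcoe]
        _ = (w g : H →L[ℂ] H) * (star (U₂ h : H →L[ℂ] H) * (U₁ h : H →L[ℂ] H)) := by
            rw [← mul_assoc, ← mul_assoc, hcomm g _ hm]
        _ = (w g * w h : unitary (H →L[ℂ] H)) := rfl
    have hw1 : w 1 = 1 := by
      show (U₂ 1)⁻¹ * U₁ 1 = 1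
      rw [map_one, map_one, inv_one, one_mul]
    let W : G →* unitary (H →L[ℂ] H) := ⟨⟨w, hw1⟩, fun a b => hwmul a b⟩
    have hWc : W ⁅g, h⁆ = 1 := by
      rw [show W ⁅g, h⁆ = ⁅W g, W h⁆ from map_commutatorElement W g h,
        commutatorElement_eq_one_iff_commute]
      exact hcc g h
    have hWe : (U₂ ⁅g, h⁆)⁻¹ * U₁ ⁅g, h⁆ = 1 := hWc
    exact (inv_mul_eq_one.mp hWe).symm
  -- conclude using perfectness
  have hsub : commutator G ≤ (MonoidHom.eqLocus U₁ U₂ : Subgroup G) := by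
    rw [commutator, Subgroup.commutator_le]
    intro a _ b _
    exact hker a b
  ext g x
  rw [hsub (hG ▸ Subgroup.mem_top g : g ∈ commutator G)]
end

section
/- Let f be a function continuous on the closed upper half-plane, holomorphic on the open upper half-plane, of at most polynomial growth there, and bounded by M on the real axis; let g be likewise on the closed lower half-plane with the same bound M on ℝ. If f = g on ℝ, then the function F defined by f on the upper and g on the lower half-plane is entire and constant, equal to its value at any real point. -/
open Complex

open Set Filter in
private theorem gluedCont_aux9 {f g : ℂ → ℂ}
    (hf_cont : ContinuousOn f {z : ℂ | 0 ≤ z.im})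
    (hg_cont : ContinuousOn g {z : ℂ | z.im ≤ 0})
    (h_eq : ∀ x : ℝ, f (x : ℂ) = g (x : ℂ)) :
    Continuous (fun z : ℂ => if 0 ≤ z.im then f z else g z) := by
  rw [← continuousOn_univ]
  refine ContinuousOn.if ?_ ?_ ?_
  · intro a ha
    have h1 : frontier {a : ℂ | 0 ≤ a.im} ⊆ {a : ℂ | a.im = 0} := by
      have := Complex.continuous_im.frontier_preimage_subset (Ici 0)
      rw [frontier_Ici] at this
      exact fun x hx => this hx
    have h2 : a.im = 0 := h1 ha.2
    have h3 : (a.re : ℂ) = a := by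
      apply Complex.ext <;> simp [h2]
    rw [← h3]
    exact h_eq a.re
  · apply hf_cont.mono
    refine inter_subset_right.trans (closure_minimal ?_ ?_)
    · exact fun x hx => hx
    · exact isClosed_le continuous_const Complex.continuous_im
  · apply hg_cont.mono
    refine inter_subset_right.trans ?_
    have : closure {a : ℂ | ¬ 0 ≤ a.im} ⊆ {a : ℂ | a.im ≤ 0} := by
      apply closure_minimal
      · intro x hx
        simp only [mem_setOf_eq, not_le] at hx
        exact le_of_lt hx
      · exact isClosed_le Complex.continuous_im continuous_const
    exact this

open Set Filter in
private theorem gluedRect_aux9 {F : ℂ → ℂ} (hF_cont : Continuous F)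
    (hup : DifferentiableOn ℂ F {z : ℂ | 0 < z.im})
    (hlo : DifferentiableOn ℂ F {z : ℂ | z.im < 0}) :
    ∀ b d a c : ℝ,
    (∫ x : ℝ in a..c, F (x + b * I)) - (∫ x : ℝ in a..c, F (x + d * I)) +
      I • (∫ y : ℝ in b..d, F (c + y * I)) -
      I • (∫ y : ℝ in b..d, F (a + y * I)) = 0 := by
  have key : ∀ b d a c : ℝ, (0 ≤ b ∧ 0 ≤ d) ∨ (b ≤ 0 ∧ d ≤ 0) →
      (∫ x : ℝ in a..c, F (x + b * I)) - (∫ x : ℝ in a..c, F (x + d * I)) +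
      I • (∫ y : ℝ in b..d, F (c + y * I)) -
      I • (∫ y : ℝ in b..d, F (a + y * I)) = 0 := by
    intro b d a c h
    have := integral_boundary_rect_eq_zero_of_continuousOn_of_differentiableOn F
      (a + b * I) (c + d * I) (hF_cont.continuousOn) ?_
    · simpa using this
    · rcases h with ⟨hb, hd⟩ | ⟨hb, hd⟩
      · apply hup.mono
        intro u hu
        rw [mem_reProdIm] at hu
        have := hu.2.1
        simp only [add_im, ofReal_im, mul_im, I_im, ofReal_re, I_re] at this ⊢
        have : min b d < u.im := by simpa using this
        exact lt_of_le_of_lt (le_min hb hd) this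
      · apply hlo.mono
        intro u hu
        rw [mem_reProdIm] at hu
        have h2 := hu.2.2
        simp only [add_im, ofReal_im, mul_im, I_im, ofReal_re, I_re] at h2 ⊢
        have : u.im < max b d := by simpa using h2
        exact lt_of_lt_of_le this (max_le hb hd)
  have intg : ∀ (e : ℝ) (b d : ℝ),
      IntervalIntegrable (fun y : ℝ => F (e + y * I)) MeasureTheory.volume b d := by
    intro e b d
    apply Continuous.intervalIntegrable
    continuity
  intro b d a c
  rcases le_total 0 b with hb | hb <;> rcases le_total 0 d with hd | hd
  · exact key b d a c (Or.inl ⟨hb, hd⟩)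
  · have h1 := key b 0 a c (Or.inl ⟨hb, le_refl 0⟩)
    have h2 := key 0 d a c (Or.inr ⟨le_refl 0, hd⟩)
    have e1 : ∫ y : ℝ in b..d, F (c + y * I) =
        (∫ y : ℝ in b..(0:ℝ), F (c + y * I)) + ∫ y : ℝ in (0:ℝ)..d, F (c + y * I) :=
      (intervalIntegral.integral_add_adjacent_intervals (intg c b 0) (intg c 0 d)).symm
    have e2 : ∫ y : ℝ in b..d, F (a + y * I) =
        (∫ y : ℝ in b..(0:ℝ), F (a + y * I)) + ∫ y : ℝ in (0:ℝ)..d, F (a + y * I) :=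
      (intervalIntegral.integral_add_adjacent_intervals (intg a b 0) (intg a 0 d)).symm
    rw [e1, e2]
    rw [smul_add, smul_add]
    linear_combination h1 + h2
  · have h1 := key b 0 a c (Or.inr ⟨hb, le_refl 0⟩)
    have h2 := key 0 d a c (Or.inl ⟨le_refl 0, hd⟩)
    have e1 : ∫ y : ℝ in b..d, F (c + y * I) =
        (∫ y : ℝ in b..(0:ℝ), F (c + y * I)) + ∫ y : ℝ in (0:ℝ)..d, F (c + y * I) :=
      (intervalIntegral.integral_add_adjacent_intervals (intg c b 0) (intg c 0 d)).symm
    have e2 : ∫ y : ℝ in b..d, F (a + y * I) =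
        (∫ y : ℝ in b..(0:ℝ), F (a + y * I)) + ∫ y : ℝ in (0:ℝ)..d, F (a + y * I) :=
      (intervalIntegral.integral_add_adjacent_intervals (intg a b 0) (intg a 0 d)).symm
    rw [e1, e2, smul_add, smul_add]
    linear_combination h1 + h2
  · exact key b d a c (Or.inr ⟨hb, hd⟩)

open Set Filter in
private theorem gluedDiffAll_aux9 {F : ℂ → ℂ} (hF_cont : Continuous F)
    (hrect : ∀ b d a c : ℝ,
      (∫ x : ℝ in a..c, F (x + b * I)) - (∫ x : ℝ in a..c, F (x + d * I)) +
        I • (∫ y : ℝ in b..d, F (c + y * I)) -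
        I • (∫ y : ℝ in b..d, F (a + y * I)) = 0) :
    Differentiable ℂ F := by
  have hint : ∀ b a c : ℝ,
      IntervalIntegrable (fun t : ℝ => F (t + b * I)) MeasureTheory.volume a c :=
    fun b a c => (hF_cont.comp (by continuity)).intervalIntegrable _ _
  have vint : ∀ (e : ℝ) (b d : ℝ),
      IntervalIntegrable (fun t : ℝ => F (e + t * I)) MeasureTheory.volume b d :=
    fun e b d => (hF_cont.comp (by continuity)).intervalIntegrable _ _
  set V : ℂ → ℂ := fun w =>
    (∫ t : ℝ in (0:ℝ)..w.re, F (t + (0:ℝ) * I)) + I • ∫ t : ℝ in (0:ℝ)..w.im, F (w.re + t * I)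
    with hV
  have hdiff : ∀ w₀ w : ℂ, V w - V w₀ =
      (∫ t : ℝ in w₀.re..w.re, F (t + w₀.im * I)) +
        I • ∫ t : ℝ in w₀.im..w.im, F (w.re + t * I) := by
    intro w₀ w
    have e1 : (∫ t : ℝ in (0:ℝ)..w.re, F (t + (0:ℝ) * I)) =
        (∫ t : ℝ in (0:ℝ)..w₀.re, F (t + (0:ℝ) * I)) +
          ∫ t : ℝ in w₀.re..w.re, F (t + (0:ℝ) * I) :=
      (intervalIntegral.integral_add_adjacent_intervals (hint 0 0 w₀.re) (hint 0 w₀.re w.re)).symm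
    have e2 : (∫ t : ℝ in (0:ℝ)..w.im, F (w.re + t * I)) =
        (∫ t : ℝ in (0:ℝ)..w₀.im, F (w.re + t * I)) +
          ∫ t : ℝ in w₀.im..w.im, F (w.re + t * I) :=
      (intervalIntegral.integral_add_adjacent_intervals (vint w.re 0 w₀.im) (vint w.re w₀.im w.im)).symm
    have hr := hrect 0 w₀.im w₀.re w.re
    simp only [hV, smul_eq_mul] at *
    rw [e1, e2]
    linear_combination hr
  have hderiv : ∀ w₀ : ℂ, HasDerivAt V (F w₀) w₀ := by
    intro w₀
    rw [hasDerivAt_iff_isLittleO, Asymptotics.isLittleO_iff]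
    intro ε hε
    obtain ⟨δ, hδpos, hδ⟩ :=
      Metric.continuousAt_iff.1 (hF_cont.continuousAt (x := w₀)) (ε/2) (by positivity)
    filter_upwards [Metric.ball_mem_nhds w₀ (by positivity : (0:ℝ) < δ/2)] with w hw
    rw [Metric.mem_ball] at hw
    have hre : |w.re - w₀.re| ≤ ‖w - w₀‖ := by
      simpa using (Complex.abs_re_le_norm (w - w₀))
    have him : |w.im - w₀.im| ≤ ‖w - w₀‖ := by
      simpa using (Complex.abs_im_le_norm (w - w₀))
    have hwd : ‖w - w₀‖ < δ/2 := by rwa [dist_eq_norm] at hw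
    have c1 : (∫ t : ℝ in w₀.re..w.re, F (t + w₀.im * I)) - ((w.re - w₀.re : ℝ) : ℂ) * F w₀ =
        ∫ t : ℝ in w₀.re..w.re, (F (t + w₀.im * I) - F w₀) := by
      rw [intervalIntegral.integral_sub (hint w₀.im w₀.re w.re) (intervalIntegrable_const)]
      rw [intervalIntegral.integral_const, Complex.real_smul]
    have c2 : (∫ t : ℝ in w₀.im..w.im, F (w.re + t * I)) - ((w.im - w₀.im : ℝ) : ℂ) * F w₀ =
        ∫ t : ℝ in w₀.im..w.im, (F (w.re + t * I) - F w₀) := by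
      rw [intervalIntegral.integral_sub (vint w.re w₀.im w.im) (intervalIntegrable_const)]
      rw [intervalIntegral.integral_const, Complex.real_smul]
    have hsub : w - w₀ = ((w.re - w₀.re : ℝ) : ℂ) + ((w.im - w₀.im : ℝ) : ℂ) * I := by
      apply Complex.ext <;> simp
    have key : V w - V w₀ - (w - w₀) • F w₀ =
        (∫ t : ℝ in w₀.re..w.re, (F (t + w₀.im * I) - F w₀)) +
          I * ∫ t : ℝ in w₀.im..w.im, (F (w.re + t * I) - F w₀) := by
      rw [hdiff w₀ w, smul_eq_mul, ← c1, ← c2, hsub]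
      simp only [smul_eq_mul]
      ring
    rw [key]
    have b1 : ‖∫ t : ℝ in w₀.re..w.re, (F (t + w₀.im * I) - F w₀)‖ ≤ (ε/2) * |w.re - w₀.re| := by
      apply intervalIntegral.norm_integral_le_of_norm_le_const
      intro t ht
      rw [Set.mem_uIoc] at ht
      have habs : |t - w₀.re| ≤ |w.re - w₀.re| := by
        have h1 := le_abs_self (w.re - w₀.re)
        have h2 := neg_abs_le (w.re - w₀.re)
        rcases ht with ⟨ht1, ht2⟩ | ⟨ht1, ht2⟩ <;> rw [abs_le] <;> constructor <;> linarith
      have hdist : dist ((t : ℂ) + w₀.im * I) w₀ < δ := by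
        have : (t : ℂ) + w₀.im * I - w₀ = ((t - w₀.re : ℝ) : ℂ) := by
          apply Complex.ext <;> simp
        rw [dist_eq_norm, this]
        calc ‖((t - w₀.re : ℝ) : ℂ)‖ = |t - w₀.re| := by
              rw [Complex.norm_real, Real.norm_eq_abs]
        _ ≤ |w.re - w₀.re| := habs
        _ ≤ ‖w - w₀‖ := hre
        _ < δ := by linarith
      have := hδ hdist
      rw [dist_eq_norm] at this
      exact this.le
    have b2 : ‖∫ t : ℝ in w₀.im..w.im, (F (w.re + t * I) - F w₀)‖ ≤ (ε/2) * |w.im - w₀.im| := by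
      apply intervalIntegral.norm_integral_le_of_norm_le_const
      intro t ht
      rw [Set.mem_uIoc] at ht
      have habs : |t - w₀.im| ≤ |w.im - w₀.im| := by
        have h1 := le_abs_self (w.im - w₀.im)
        have h2 := neg_abs_le (w.im - w₀.im)
        rcases ht with ⟨ht1, ht2⟩ | ⟨ht1, ht2⟩ <;> rw [abs_le] <;> constructor <;> linarith
      have hdist : dist ((w.re : ℂ) + t * I) w₀ < δ := by
        have hdec : (w.re : ℂ) + t * I - w₀ =
            ((w.re - w₀.re : ℝ) : ℂ) + ((t - w₀.im : ℝ) : ℂ) * I := by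
          apply Complex.ext <;> simp
        rw [dist_eq_norm, hdec]
        calc ‖((w.re - w₀.re : ℝ) : ℂ) + ((t - w₀.im : ℝ) : ℂ) * I‖
            ≤ ‖((w.re - w₀.re : ℝ) : ℂ)‖ + ‖((t - w₀.im : ℝ) : ℂ) * I‖ := norm_add_le _ _
        _ = |w.re - w₀.re| + |t - w₀.im| := by
              rw [Complex.norm_real, norm_mul, Complex.norm_real, Complex.norm_I, mul_one,
                Real.norm_eq_abs, Real.norm_eq_abs]
        _ ≤ ‖w - w₀‖ + |w.im - w₀.im| := by linarith [habs.trans him]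
        _ ≤ ‖w - w₀‖ + ‖w - w₀‖ := by linarith
        _ < δ := by linarith
      have := hδ hdist
      rw [dist_eq_norm] at this
      exact this.le
    calc ‖(∫ t : ℝ in w₀.re..w.re, (F (t + w₀.im * I) - F w₀)) +
          I * ∫ t : ℝ in w₀.im..w.im, (F (w.re + t * I) - F w₀)‖
        ≤ ‖∫ t : ℝ in w₀.re..w.re, (F (t + w₀.im * I) - F w₀)‖ +
          ‖I * ∫ t : ℝ in w₀.im..w.im, (F (w.re + t * I) - F w₀)‖ := norm_add_le _ _
      _ = ‖∫ t : ℝ in w₀.re..w.re, (F (t + w₀.im * I) - F w₀)‖ +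
          ‖∫ t : ℝ in w₀.im..w.im, (F (w.re + t * I) - F w₀)‖ := by
            rw [norm_mul, Complex.norm_I, one_mul]
      _ ≤ (ε/2) * |w.re - w₀.re| + (ε/2) * |w.im - w₀.im| := by linarith
      _ ≤ (ε/2) * ‖w - w₀‖ + (ε/2) * ‖w - w₀‖ := by
            have := (half_pos hε).le
            gcongr
      _ = ε * ‖w - w₀‖ := by ring
  have hVdiff : Differentiable ℂ V := fun w => (hderiv w).differentiableAt
  have hFeq : deriv V = F := funext fun w => (hderiv w).deriv
  have hA : AnalyticOnNhd ℂ (deriv V) univ :=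
    (hVdiff.differentiableOn.analyticOnNhd isOpen_univ).deriv
  rw [← hFeq]
  exact fun z => (hA z (mem_univ z)).differentiableAt

open Set Filter in
private theorem upperPL_aux9 {F : ℂ → ℂ} (hF : Differentiable ℂ F) {C M : ℝ} {n : ℕ}
    (hgr : ∀ z : ℂ, ‖F z‖ ≤ C * (1 + ‖z‖) ^ n) (hbd : ∀ x : ℝ, ‖F (x : ℂ)‖ ≤ M)
    {z : ℂ} (hz : 0 ≤ z.im) : ‖F z‖ ≤ M := by
  have hC0 : 0 ≤ C := by
    have h := hgr 0
    simp only [norm_zero, add_zero, one_pow, mul_one] at h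
    exact le_trans (norm_nonneg _) h
  have hcont : Continuous fun ε : ℝ => M * Real.exp (ε * z.im) := by continuity
  have h0 : Tendsto (fun ε : ℝ => M * Real.exp (ε * z.im)) (nhds 0)
      (nhds (M * Real.exp (0 * z.im))) := hcont.tendsto 0
  rw [zero_mul, Real.exp_zero, mul_one] at h0
  refine ge_of_tendsto (h0.mono_left
    (nhdsWithin_le_nhds : nhdsWithin 0 (Set.Ioi (0:ℝ)) ≤ nhds 0)) ?_
  filter_upwards [self_mem_nhdsWithin] with ε hε
  rw [mem_Ioi] at hε
  set v : ℂ → ℂ := fun w => F (I * w) * Complex.exp (-(ε : ℂ) * w) with hv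
  have hvdiff : Differentiable ℂ v :=
    (hF.comp ((differentiable_id).const_mul I)).mul
      (((differentiable_id).const_mul (-(ε : ℂ))).cexp)
  have hnorm_exp : ∀ w : ℂ, ‖Complex.exp (-(ε : ℂ) * w)‖ = Real.exp (-(ε * w.re)) := by
    intro w
    rw [Complex.norm_exp]
    congr 1
    simp
  have hnormv : ∀ w : ℂ, ‖v w‖ = ‖F (I * w)‖ * Real.exp (-(ε * w.re)) := by
    intro w
    rw [hv]; rw [norm_mul, hnorm_exp]
  have hIw : ∀ w : ℂ, ‖I * w‖ = ‖w‖ := fun w => by rw [norm_mul, Complex.norm_I, one_mul]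
  have key : ∀ w : ℂ, 0 ≤ w.re → ‖v w‖ ≤ M := by
    intro w hw
    refine PhragmenLindelof.right_half_plane_of_bounded_on_real hvdiff.diffContOnCl ?_ ?_ ?_ hw
    · refine ⟨1, one_lt_two, (n : ℝ), Asymptotics.IsBigO.of_bound C ?_⟩
      rw [Filter.eventually_inf_principal]
      refine Eventually.of_forall fun w hw => ?_
      have hw0 : (0:ℝ) < w.re := hw
      have h1 : ‖v w‖ ≤ C * (1 + ‖w‖) ^ n := by
        rw [hnormv]
        calc ‖F (I * w)‖ * Real.exp (-(ε * w.re)) ≤ (C * (1 + ‖I * w‖) ^ n) * 1 := by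
              apply mul_le_mul (hgr _) ?_ (Real.exp_pos _).le ?_
              · rw [Real.exp_le_one_iff]
                nlinarith
              · positivity
        _ = C * (1 + ‖w‖) ^ n := by rw [hIw, mul_one]
      have h2 : (1 + ‖w‖) ^ n ≤ Real.exp ((n : ℝ) * ‖w‖) := by
        rw [Real.exp_nat_mul]
        apply pow_le_pow_left₀ (by positivity)
        linarith [Real.add_one_le_exp ‖w‖]
      have h3 : ‖Real.exp ((n : ℝ) * ‖w‖ ^ (1:ℝ))‖ = Real.exp ((n:ℝ) * ‖w‖) := by
        rw [Real.norm_eq_abs, abs_of_pos (Real.exp_pos _), Real.rpow_one]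
      rw [h3]
      calc ‖v w‖ ≤ C * (1 + ‖w‖) ^ n := h1
      _ ≤ C * Real.exp ((n:ℝ) * ‖w‖) := by
          apply mul_le_mul_of_nonneg_left h2 hC0
    · have T0 : Tendsto (fun y : ℝ => y ^ n * Real.exp (-ε * y)) atTop (nhds 0) := by
        have := tendsto_rpow_mul_exp_neg_mul_atTop_nhds_zero n ε hε
        refine this.congr' ?_
        filter_upwards [Filter.eventually_ge_atTop (0:ℝ)] with x hx
        rw [Real.rpow_natCast]
      have T1 : Tendsto (fun x : ℝ => (1 + x) ^ n * Real.exp (-ε * (1 + x))) atTop (nhds 0) :=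
        T0.comp (tendsto_atTop_add_const_left atTop 1 tendsto_id)
      have T2 : Tendsto (fun x : ℝ =>
          (C * Real.exp ε) * ((1 + x) ^ n * Real.exp (-ε * (1 + x)))) atTop (nhds 0) := by
        have := T1.const_mul (C * Real.exp ε)
        simpa using this
      refine (squeeze_zero' ?_ ?_ T2).isBoundedUnder_le
      · exact Eventually.of_forall fun x => norm_nonneg _
      · filter_upwards [Filter.eventually_ge_atTop (0:ℝ)] with x hx
        have e1 : Real.exp (-ε * (1 + x)) = Real.exp (-ε) * Real.exp (-(ε * x)) := by
          rw [← Real.exp_add]; ring_nf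
        have e2 : Real.exp ε * Real.exp (-ε) = 1 := by
          rw [← Real.exp_add]; simp
        have h1 : ‖v (x : ℂ)‖ ≤ C * (1 + x) ^ n * Real.exp (-(ε * x)) := by
          rw [hnormv]
          have : ‖F (I * (x:ℂ))‖ ≤ C * (1 + x) ^ n := by
            have := hgr (I * (x:ℂ))
            rwa [hIw, Complex.norm_real, Real.norm_eq_abs, _root_.abs_of_nonneg hx] at this
          have hre : ((x:ℂ)).re = x := by simp
          rw [hre]
          exact mul_le_mul_of_nonneg_right this (Real.exp_pos _).le
        calc ‖v (x:ℂ)‖ ≤ C * (1 + x) ^ n * Real.exp (-(ε * x)) := h1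
        _ = (C * Real.exp ε) * ((1 + x) ^ n * Real.exp (-ε * (1 + x))) := by
            rw [e1,
              show (C * Real.exp ε) * ((1 + x) ^ n * (Real.exp (-ε) * Real.exp (-(ε * x)))) =
                (Real.exp ε * Real.exp (-ε)) * (C * (1 + x) ^ n * Real.exp (-(ε * x))) from by ring,
              e2, one_mul]
    · intro x
      have hx : I * ((x:ℂ) * I) = ((-x : ℝ) : ℂ) := by
        push_cast
        rw [mul_comm (x:ℂ) I, ← mul_assoc, I_mul_I]
        ring
      rw [hnormv, hx]
      have : ((x:ℂ) * I).re = 0 := by simp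
      rw [this, mul_zero, neg_zero, Real.exp_zero, mul_one]
      exact hbd (-x)
  have hw : (0:ℝ) ≤ (-I * z).re := by simp [hz]
  have := key (-I * z) hw
  rw [hnormv] at this
  have h1 : I * (-I * z) = z := by
    rw [← mul_assoc]
    simp
  have h2 : (-I * z).re = z.im := by simp
  rw [h1, h2] at this
  calc ‖F z‖ = ‖F z‖ * Real.exp (-(ε * z.im)) * Real.exp (ε * z.im) := by
        rw [mul_assoc, ← Real.exp_add, neg_add_cancel, Real.exp_zero, mul_one]
  _ ≤ M * Real.exp (ε * z.im) := mul_le_mul_of_nonneg_right this (Real.exp_pos _).le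

/-- Edge-of-the-wedge with Phragmén–Lindelöf and Liouville: if `f` is continuous on
the closed upper half-plane, holomorphic with at most polynomial growth on the open
upper half-plane, bounded by `M` on `ℝ`, and `g` is likewise on the lower half-plane,
and `f = g` on `ℝ`, then the glued function is constant, equal to `f` at any real
point. -/
theorem stmt_9 (f g : ℂ → ℂ) (M : ℝ)
    (hf_cont : ContinuousOn f {z : ℂ | 0 ≤ z.im})
    (hf_hol : DifferentiableOn ℂ f {z : ℂ | 0 < z.im})
    (hf_growth : ∃ (C : ℝ) (n : ℕ), ∀ z : ℂ, 0 ≤ z.im → ‖f z‖ ≤ C * (1 + ‖z‖) ^ n)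
    (hf_bdd : ∀ x : ℝ, ‖f (x : ℂ)‖ ≤ M)
    (hg_cont : ContinuousOn g {z : ℂ | z.im ≤ 0})
    (hg_hol : DifferentiableOn ℂ g {z : ℂ | z.im < 0})
    (hg_growth : ∃ (C : ℝ) (n : ℕ), ∀ z : ℂ, z.im ≤ 0 → ‖g z‖ ≤ C * (1 + ‖z‖) ^ n)
    (hg_bdd : ∀ x : ℝ, ‖g (x : ℂ)‖ ≤ M)
    (h_eq : ∀ x : ℝ, f (x : ℂ) = g (x : ℂ)) :
    ∃ c : ℂ, (∀ z : ℂ, 0 ≤ z.im → f z = c) ∧ (∀ z : ℂ, z.im ≤ 0 → g z = c) ∧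
      ∀ x : ℝ, c = f (x : ℂ) := by
  classical
  set F : ℂ → ℂ := fun z => if 0 ≤ z.im then f z else g z with hF
  have hFf : ∀ z : ℂ, 0 ≤ z.im → F z = f z := by
    intro z hz
    simp only [hF, if_pos hz]
  have hFg : ∀ z : ℂ, z.im ≤ 0 → F z = g z := by
    intro z hz
    by_cases h0 : 0 ≤ z.im
    · have him : z.im = 0 := le_antisymm hz h0
      have hzre : (z.re : ℂ) = z := by
        apply Complex.ext <;> simp [him]
      simp only [hF, if_pos h0]
      rw [← hzre, h_eq]
    · simp only [hF, if_neg h0]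
  have hFR : ∀ x : ℝ, F (x : ℂ) = f (x : ℂ) := fun x => hFf _ (by simp)
  have hF_cont : Continuous F := gluedCont_aux9 hf_cont hg_cont h_eq
  have hup : DifferentiableOn ℂ F {z : ℂ | 0 < z.im} :=
    hf_hol.congr fun z hz => hFf z (le_of_lt hz)
  have hlo : DifferentiableOn ℂ F {z : ℂ | z.im < 0} :=
    hg_hol.congr fun z hz => hFg z (le_of_lt hz)
  have hFdiff : Differentiable ℂ F :=
    gluedDiffAll_aux9 hF_cont (gluedRect_aux9 hF_cont hup hlo)
  -- global polynomial growth
  obtain ⟨C₁, n₁, hgr₁⟩ := hf_growth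
  obtain ⟨C₂, n₂, hgr₂⟩ := hg_growth
  have hC₁ : 0 ≤ C₁ := by
    have h := hgr₁ 0 (by simp)
    simp only [norm_zero, add_zero, one_pow, mul_one] at h
    exact le_trans (norm_nonneg _) h
  have hC₂ : 0 ≤ C₂ := by
    have h := hgr₂ 0 (by simp)
    simp only [norm_zero, add_zero, one_pow, mul_one] at h
    exact le_trans (norm_nonneg _) h
  have hgr : ∀ z : ℂ, ‖F z‖ ≤ (max C₁ C₂) * (1 + ‖z‖) ^ (max n₁ n₂) := by
    intro z
    have hb : (1:ℝ) ≤ 1 + ‖z‖ := by linarith [norm_nonneg z]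
    rcases le_total 0 z.im with hz | hz
    · rw [hFf z hz]
      calc ‖f z‖ ≤ C₁ * (1 + ‖z‖) ^ n₁ := hgr₁ z hz
      _ ≤ (max C₁ C₂) * (1 + ‖z‖) ^ (max n₁ n₂) := by
          apply mul_le_mul (le_max_left _ _)
            (pow_le_pow_right₀ hb (le_max_left _ _)) (by positivity)
            (le_trans hC₁ (le_max_left _ _))
    · rw [hFg z hz]
      calc ‖g z‖ ≤ C₂ * (1 + ‖z‖) ^ n₂ := hgr₂ z hz
      _ ≤ (max C₁ C₂) * (1 + ‖z‖) ^ (max n₁ n₂) := by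
          apply mul_le_mul (le_max_right _ _)
            (pow_le_pow_right₀ hb (le_max_right _ _)) (by positivity)
            (le_trans hC₁ (le_max_left _ _))
  have hbdR : ∀ x : ℝ, ‖F (x : ℂ)‖ ≤ M := fun x => by rw [hFR]; exact hf_bdd x
  -- upper bound on the whole plane
  have hbd : ∀ z : ℂ, ‖F z‖ ≤ M := by
    intro z
    rcases le_total 0 z.im with hz | hz
    · exact upperPL_aux9 hFdiff hgr hbdR hz
    · -- apply to F ∘ neg
      have hGdiff : Differentiable ℂ (fun w => F (-w)) := hFdiff.comp differentiable_neg
      have hGgr : ∀ w : ℂ, ‖F (-w)‖ ≤ (max C₁ C₂) * (1 + ‖w‖) ^ (max n₁ n₂) := by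
        intro w
        have := hgr (-w)
        rwa [norm_neg] at this
      have hGbd : ∀ x : ℝ, ‖F ((-(x:ℂ)))‖ ≤ M := by
        intro x
        have : -(x:ℂ) = ((-x : ℝ) : ℂ) := by push_cast; ring
        rw [this]
        exact hbdR (-x)
      have hzim : 0 ≤ (-z).im := by simp [hz]
      have := upperPL_aux9 hGdiff hGgr hGbd hzim
      rwa [neg_neg] at this
  -- Liouville
  have hrange : Bornology.IsBounded (Set.range F) := by
    rw [isBounded_iff_forall_norm_le]
    exact ⟨M, by rintro x ⟨z, rfl⟩; exact hbd z⟩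
  obtain ⟨c, hc⟩ := hFdiff.exists_const_forall_eq_of_bounded hrange
  refine ⟨c, ?_, ?_, ?_⟩
  · intro z hz
    rw [← hFf z hz]
    exact hc z
  · intro z hz
    rw [← hFg z hz]
    exact hc z
  · intro x
    rw [← hFR x]
    exact (hc _).symm
end

section
/- Let A ≥ 0 and B ≥ 0 be positive self-adjoint operators on H, with A affiliated to a von Neumann algebra M and B affiliated to M′, such that exp(itA) and exp(itB) commute, and let Ω ∈ H satisfy exp(itA)·exp(itB)Ω = Ω for all t ∈ ℝ. Then exp(itA)Ω = Ω and exp(itB)Ω = Ω for all t ∈ ℝ. -/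
open Complex

section Aux

variable {H : Type*} [NormedAddCommGroup H] [InnerProductSpace ℂ H] [CompleteSpace H]

private lemma stmt11_smul_eq (C : H →L[ℂ] H) (t : ℝ) :
    (((t : ℂ) * I) • C) = t • (I • C) := by
  rw [← smul_assoc, Complex.real_smul]

private lemma stmt11_inner_self_re (y : H) : (inner ℂ y y : ℂ).re = ‖y‖ ^ 2 := by
  rw [inner_self_eq_norm_sq_to_K]; norm_num [← Complex.ofReal_pow]

private lemma stmt11_exp_fix_of_ker (M : H →L[ℂ] H) (x : H) (h : M x = 0) (t : ℝ) :
    NormedSpace.exp (t • M) x = x := by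
  set L := (ContinuousLinearMap.apply ℂ H x).restrictScalars ℝ with hL
  have hder : ∀ s : ℝ, HasDerivAt (fun u : ℝ => NormedSpace.exp (u • M) x) 0 s := by
    intro s
    have h1 := L.hasFDerivAt.comp_hasDerivAt s (hasDerivAt_exp_smul_const M s)
    simpa [hL, ContinuousLinearMap.mul_apply, h, Function.comp_def] using h1
  have := is_const_of_deriv_eq_zero (f := fun u : ℝ => NormedSpace.exp (u • M) x)
    (fun s => (hder s).differentiableAt) (fun s => (hder s).deriv) t 0
  simpa [NormedSpace.exp_zero] using this

private lemma stmt11_ker_of_exp_fix (M : H →L[ℂ] H) (x : H)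
    (h : ∀ t : ℝ, NormedSpace.exp (t • M) x = x) : M x = 0 := by
  set L := (ContinuousLinearMap.apply ℂ H x).restrictScalars ℝ with hL
  have h1 := L.hasFDerivAt.comp_hasDerivAt 0 (hasDerivAt_exp_smul_const M 0)
  have h2 : HasDerivAt (fun u : ℝ => NormedSpace.exp (u • M) x) 0 0 := by
    have : (fun u : ℝ => NormedSpace.exp (u • M) x) = fun _ => x := funext h
    rw [this]; exact hasDerivAt_const 0 x
  have := h1.unique h2
  simpa [hL, ContinuousLinearMap.mul_apply, NormedSpace.exp_zero] using this

private lemma stmt11_pos_inner_zero (A : H →L[ℂ] H) (hA : IsSelfAdjoint A)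
    (hpos : ∀ x : H, 0 ≤ (inner ℂ x (A x) : ℂ).re) (v : H)
    (h0 : (inner ℂ v (A v) : ℂ).re = 0) : A v = 0 := by
  set y := A v with hy
  have hadj : ∀ a b : H, (inner ℂ a (A b) : ℂ) = inner ℂ (A a) b := by
    intro a b
    conv_lhs => rw [← hA.adjoint_eq]
    rw [ContinuousLinearMap.adjoint_inner_right]
  have key : ∀ t : ℝ, 0 ≤ 2 * t * ‖y‖ ^ 2 + t ^ 2 * (inner ℂ y (A y) : ℂ).re := by
    intro t
    have h := hpos (v + (t : ℂ) • y)
    have hexpand : (inner ℂ (v + (t : ℂ) • y) (A (v + (t : ℂ) • y)) : ℂ).re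
        = (inner ℂ v (A v) : ℂ).re + t * (inner ℂ v (A y) : ℂ).re
          + t * (inner ℂ y (A v) : ℂ).re + t ^ 2 * (inner ℂ y (A y) : ℂ).re := by
      rw [map_add, map_smul]
      simp only [inner_add_left, inner_add_right, inner_smul_left, inner_smul_right,
        Complex.conj_ofReal, Complex.add_re, Complex.mul_re, Complex.ofReal_re,
        Complex.ofReal_im]
      ring
    have hvy : (inner ℂ v (A y) : ℂ).re = ‖y‖ ^ 2 := by
      rw [hadj, ← hy]; exact stmt11_inner_self_re y
    have hyv : (inner ℂ y (A v) : ℂ).re = ‖y‖ ^ 2 := by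
      rw [← hy]; exact stmt11_inner_self_re y
    rw [hexpand, h0, hvy, hyv] at h
    linarith
  have hK : 0 ≤ (inner ℂ y (A y) : ℂ).re := hpos y
  set K := (inner ℂ y (A y) : ℂ).re with hKdef
  set n := ‖y‖ ^ 2 with hndef
  have hn0 : 0 ≤ n := sq_nonneg _
  have hn : n = 0 := by
    rcases eq_or_lt_of_le hK with hK0 | hKpos
    · have := key (-1); nlinarith
    · have hKne : K ≠ 0 := ne_of_gt hKpos
      have h1 := key (-(n / K))
      have e : 2 * (-(n / K)) * n + (-(n / K)) ^ 2 * K = -(n ^ 2 / K) := by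
        field_simp; ring
      rw [e] at h1
      have h3 : 0 ≤ n ^ 2 / K := div_nonneg (sq_nonneg n) hK
      have h4 : n ^ 2 / K = 0 := le_antisymm (by linarith) h3
      field_simp at h4
      simpa using h4
  have : y = 0 := norm_eq_zero.mp (pow_eq_zero_iff (n := 2) (by norm_num) |>.mp hn)
  simpa [hy] using this

end Aux

/-- Let `A, B` be commuting positive self-adjoint generators of one-parameter unitary
groups. If `exp(itA)·exp(itB) Ω = Ω` for all `t ∈ ℝ`, then already
`exp(itA) Ω = Ω` and `exp(itB) Ω = Ω` for all `t`. -/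
theorem stmt_11 {H : Type*} [NormedAddCommGroup H] [InnerProductSpace ℂ H]
    [CompleteSpace H] (A B : H →L[ℂ] H)
    (hA : IsSelfAdjoint A) (hB : IsSelfAdjoint B)
    (hApos : ∀ x : H, 0 ≤ (inner ℂ x (A x) : ℂ).re)
    (hBpos : ∀ x : H, 0 ≤ (inner ℂ x (B x) : ℂ).re)
    (hAB : Commute A B) (Ω : H)
    (hΩ : ∀ t : ℝ,
      (NormedSpace.exp (((t : ℂ) * Complex.I) • A) *
        NormedSpace.exp (((t : ℂ) * Complex.I) • B)) Ω = Ω) :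
    (∀ t : ℝ, NormedSpace.exp (((t : ℂ) * Complex.I) • A) Ω = Ω) ∧
    (∀ t : ℝ, NormedSpace.exp (((t : ℂ) * Complex.I) • B) Ω = Ω) := by
  -- exp(itA) * exp(itB) = exp(it(A+B))
  have hexpC : ∀ (C : H →L[ℂ] H) (t : ℝ),
      NormedSpace.exp (((t : ℂ) * I) • C) = NormedSpace.exp (t • (I • C)) := by
    intro C t
    rw [stmt11_smul_eq]
  have hsum : ∀ t : ℝ, NormedSpace.exp (t • (I • (A + B))) Ω = Ω := by
    intro t
    have hc : Commute (((t : ℂ) * I) • A) (((t : ℂ) * I) • B) :=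
      (hAB.smul_left _).smul_right _
    let +nondep : NormedAlgebra ℚ (H →L[ℂ] H) := .restrictScalars ℚ ℂ _
    have := hΩ t
    rw [ContinuousLinearMap.mul_apply, ← ContinuousLinearMap.mul_apply,
      ← NormedSpace.exp_add_of_commute hc] at this
    rw [← hexpC]
    rw [← smul_add] at this
    exact this
  -- hence (A + B) Ω = 0
  have hABΩ : (A + B) Ω = 0 := by
    have h0 := stmt11_ker_of_exp_fix (I • (A + B)) Ω hsum
    rw [ContinuousLinearMap.smul_apply] at h0
    simpa [Complex.I_ne_zero] using (smul_eq_zero.mp h0)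
  -- hence AΩ = 0 and BΩ = 0 by positivity
  have hre : (inner ℂ Ω (A Ω) : ℂ).re + (inner ℂ Ω (B Ω) : ℂ).re = 0 := by
    have : (inner ℂ Ω ((A + B) Ω) : ℂ) = 0 := by rw [hABΩ, inner_zero_right]
    rw [ContinuousLinearMap.add_apply, inner_add_right] at this
    have := congrArg Complex.re this
    simpa using this
  have hreA : (inner ℂ Ω (A Ω) : ℂ).re = 0 := le_antisymm (by linarith [hBpos Ω]) (hApos Ω)
  have hreB : (inner ℂ Ω (B Ω) : ℂ).re = 0 := le_antisymm (by linarith [hApos Ω]) (hBpos Ω)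
  have hAΩ : A Ω = 0 := stmt11_pos_inner_zero A hA hApos Ω hreA
  have hBΩ : B Ω = 0 := stmt11_pos_inner_zero B hB hBpos Ω hreB
  constructor
  · intro t
    rw [hexpC]
    exact stmt11_exp_fix_of_ker _ Ω (by simp [hAΩ]) t
  · intro t
    rw [hexpC]
    exact stmt11_exp_fix_of_ker _ Ω (by simp [hBΩ]) t
end
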